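/- Let c₁, c₂, c₃ be positive integers with c₁ = min(c₁,c₂,c₃), set C = c₁³+c₂³+c₃³, let β ≥ 1 and p ≥ 1 be integers, and let N be an integer with 2Cp³ + 216β³p³ < N < 2Cp³ + 6c₁³p³. If x₀ is a positive integer with x₀ ≤ 6βp, N − x₀³ = 2Cp³ + 6pQ₀ for some integer Q₀, and Q₀ = c₁X₁² + c₂X₂² + c₃X₃² for some integers X₁, X₂, X₃, then N is the sum of cubes of seven positive integers. -/

import Mathlib

/-!
Since `(a + X)³ + (a - X)³ = 2a³ + 6aX²`, taking `a = cᵢp` for `i = 1, 2, 3` writes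
`N - x₀³ = 2Cp³ + 6p(c₁X₁² + c₂X₂² + c₃X₃²)` as a sum of six cubes `(cᵢp ± Xᵢ)³`.
These are positive because `|Xᵢ| < cᵢp`: the upper bound on `N` forces `Q₀ < c₁³p²`,
and `cᵢXᵢ² ≤ Q₀` while `c₁ ≤ cᵢ`.
-/

theorem add_pow_three_add_sub_pow_three {R : Type*} [CommRing R] (a X : R) :
    (a + X) ^ 3 + (a - X) ^ 3 = 2 * a ^ 3 + 6 * a * X ^ 2 := by
  ring

theorem exists_pos_pow_three_add_eq {R : Type*} [CommRing R] [LinearOrder R]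
    [IsStrictOrderedRing R] {a X : R} (ha : 0 < a) (h : X ^ 2 < a ^ 2) :
    ∃ m n : R, 0 < m ∧ 0 < n ∧ m ^ 3 + n ^ 3 = 2 * a ^ 3 + 6 * a * X ^ 2 := by
  obtain ⟨hlt, hgt⟩ := abs_lt.mp (abs_lt_of_sq_lt_sq h ha.le)
  exact ⟨a + X, a - X, by linarith, by linarith, add_pow_three_add_sub_pow_three a X⟩

theorem exists_pos_pow_three_add_eq_of_mul_sq_lt {c p X : ℤ} (hc : 0 < c) (hp : 0 < p)
    (h : c * X ^ 2 < c ^ 3 * p ^ 2) :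
    ∃ m n : ℤ, 0 < m ∧ 0 < n ∧ m ^ 3 + n ^ 3 = 2 * c ^ 3 * p ^ 3 + 6 * p * (c * X ^ 2) := by
  have hX : X ^ 2 < (c * p) ^ 2 :=
    lt_of_mul_lt_mul_left (by linear_combination h) hc.le
  obtain ⟨m, n, hm, hn, hmn⟩ := exists_pos_pow_three_add_eq (mul_pos hc hp) hX
  exact ⟨m, n, hm, hn, by linear_combination hmn⟩

theorem seven_pos_cubes_general (c₁ c₂ c₃ p N x₀ Q₀ X₁ X₂ X₃ : ℤ)
    (hc₁ : 0 < c₁) (hc₂ : 0 < c₂) (hc₃ : 0 < c₃)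
    (hmin : c₁ = min c₁ (min c₂ c₃))
    (hp : 1 ≤ p)
    (hhigh : N < 2 * (c₁^3 + c₂^3 + c₃^3) * p^3 + 6 * c₁^3 * p^3)
    (hx₀ : 0 < x₀)
    (hQ : N - x₀^3 = 2 * (c₁^3 + c₂^3 + c₃^3) * p^3 + 6 * p * Q₀)
    (hrep : Q₀ = c₁*X₁^2 + c₂*X₂^2 + c₃*X₃^2) :
    ∃ n₁ n₂ n₃ n₄ n₅ n₆ n₇ : ℤ, 0 < n₁ ∧ 0 < n₂ ∧ 0 < n₃ ∧ 0 < n₄ ∧ 0 < n₅ ∧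
      0 < n₆ ∧ 0 < n₇ ∧
      N = n₁^3 + n₂^3 + n₃^3 + n₄^3 + n₅^3 + n₆^3 + n₇^3 := by
  have hp₀ : 0 < p := by omega
  have hc₁₂ : c₁ ≤ c₂ := by have := min_le_left c₂ c₃; omega
  have hc₁₃ : c₁ ≤ c₃ := by have := min_le_right c₂ c₃; omega
  have hQ₀ : Q₀ < c₁ ^ 3 * p ^ 2 := by nlinarith [pow_pos hx₀ 3]
  have hmono {c : ℤ} (hc : c₁ ≤ c) : c₁ ^ 3 * p ^ 2 ≤ c ^ 3 * p ^ 2 := by gcongr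
  have hnonneg {c : ℤ} (hc : 0 < c) : ∀ X, 0 ≤ c * X ^ 2 := fun X => by positivity
  obtain ⟨n₂, n₃, h₂, h₃, h₂₃⟩ := exists_pos_pow_three_add_eq_of_mul_sq_lt hc₁ hp₀
    (X := X₁) (by linarith [hnonneg hc₂ X₂, hnonneg hc₃ X₃])
  obtain ⟨n₄, n₅, h₄, h₅, h₄₅⟩ := exists_pos_pow_three_add_eq_of_mul_sq_lt hc₂ hp₀
    (X := X₂) (by linarith [hnonneg hc₁ X₁, hnonneg hc₃ X₃, hmono hc₁₂])
  obtain ⟨n₆, n₇, h₆, h₇, h₆₇⟩ := exists_pos_pow_three_add_eq_of_mul_sq_lt hc₃ hp₀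
    (X := X₃) (by linarith [hnonneg hc₁ X₁, hnonneg hc₂ X₂, hmono hc₁₃])
  exact ⟨x₀, n₂, n₃, n₄, n₅, n₆, n₇, hx₀, h₂, h₃, h₄, h₅, h₆, h₇,
    by linear_combination hQ + 6 * p * hrep - h₂₃ - h₄₅ - h₆₇⟩

theorem seven_pos_cubes (c₁ c₂ c₃ β p N x₀ Q₀ X₁ X₂ X₃ : ℤ)
    (hc₁ : 0 < c₁) (hc₂ : 0 < c₂) (hc₃ : 0 < c₃)
    (hmin : c₁ = min c₁ (min c₂ c₃))
    (hβ : 1 ≤ β) (hp : 1 ≤ p)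
    (hlow : 2 * (c₁^3 + c₂^3 + c₃^3) * p^3 + 216 * β^3 * p^3 < N)
    (hhigh : N < 2 * (c₁^3 + c₂^3 + c₃^3) * p^3 + 6 * c₁^3 * p^3)
    (hx₀ : 0 < x₀) (hx₀le : x₀ ≤ 6 * β * p)
    (hQ : N - x₀^3 = 2 * (c₁^3 + c₂^3 + c₃^3) * p^3 + 6 * p * Q₀)
    (hrep : Q₀ = c₁*X₁^2 + c₂*X₂^2 + c₃*X₃^2) :
    ∃ n₁ n₂ n₃ n₄ n₅ n₆ n₇ : ℤ, 0 < n₁ ∧ 0 < n₂ ∧ 0 < n₃ ∧ 0 < n₄ ∧ 0 < n₅ ∧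
      0 < n₆ ∧ 0 < n₇ ∧
      N = n₁^3 + n₂^3 + n₃^3 + n₄^3 + n₅^3 + n₆^3 + n₇^3 :=
  seven_pos_cubes_general c₁ c₂ c₃ p N x₀ Q₀ X₁ X₂ X₃ hc₁ hc₂ hc₃ hmin hp hhigh hx₀ hQ hrep
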